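/- Let (X,d) be a doubling metric space. Then there exists a constant c > 0, depending only on the doubling constant, such that for every r > 0 there exist an r-separated set of points {x_i} ⊂ X and radii r_i ∈ [r, 2r] with the following two properties: (1) the balls B(x_i, r_i) cover X, i.e. X ⊂ ⋃_i B(x_i, r_i); and (2) for all indices i, j, the quantity d(x_i, x_j) − r_i − r_j does not lie in the open interval (0, c·r). -/

import Mathlib

open Set Metric

/-!
A maximal `r`-separated set `s` is an `r`-net, so balls of any radii `≥ r` around its points
cover `X`. Well-order `X` and choose the radii `r + j ε` (`j ≤ n`, `(n + 1) ε ≤ r`) by transfinite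
recursion. Only the points of `s` in `B(x, 4r)` can forbid a choice at `x`; by doubling there are
at most `n = C³` of them, and each forbids at most one `j` because the gaps
`d(x, y) - r - ρ(y) - j ε` for different `j` are `ε` apart. So one of the `n + 1` candidates is
admissible against all earlier points, and `c = 1 / (C³ + 1)` works.
-/

/-- A metric space is doubling with constant `C` if every ball of radius `r > 0` can be
covered by at most `C` balls of radius `r / 2`. -/
def IsDoublingSpace (X : Type*) [MetricSpace X] (C : ℕ) : Prop :=
  ∀ (x : X) (r : ℝ), 0 < r → ∃ s : Finset X, s.card ≤ C ∧
    ball x r ⊆ ⋃ y ∈ s, ball y (r / 2)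

theorem WellFounded.exists_fix_of_forall_exists {α β : Sort*} {lt : α → α → Prop}
    (hwf : WellFounded lt) (P : (x : α) → ((y : α) → lt y x → β) → β → Prop)
    (h : ∀ x f, ∃ b, P x f b) : ∃ g : α → β, ∀ x, P x (fun y _ => g y) (g x) := by
  refine ⟨hwf.fix fun x f => (h x f).choose, fun x => ?_⟩
  rw [hwf.fix_eq]
  exact (h x _).choose_spec

theorem Set.exists_forall_not_of_encard_lt {α β : Type*} [Fintype β] {t : Set α}
    (ht : t.encard < Fintype.card β) (bad : α → β → Prop)
    (hbad : ∀ y ∈ t, ∀ i j, bad y i → bad y j → i = j) : ∃ j, ∀ y ∈ t, ¬bad y j := by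
  by_contra! hall
  choose g hgt hg using hall
  have hinj : InjOn g univ := fun i _ j _ hij => hbad _ (hgt i) i j (hg i) (hij ▸ hg j)
  have := encard_le_encard_of_injOn (fun i _ => hgt i) hinj
  rw [encard_univ, ENat.card_eq_coe_fintype_card] at this
  exact (this.trans_lt ht).false

theorem exists_maximal_pairwise {α : Type*} (r : α → α → Prop) :
    ∃ s : Set α, Maximal (fun t => t.Pairwise r) s :=
  zorn_subset _ fun c hcS hc => ⟨⋃₀ c, hc.pairwise_sUnion.2 hcS, fun _ => subset_sUnion_of_mem⟩

lemma eq_of_sub_natCast_mul_mem_Ioo {a ε : ℝ} {i j : ℕ} (hi : a - i * ε ∈ Ioo 0 ε)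
    (hj : a - j * ε ∈ Ioo 0 ε) : i = j := by
  have hε : 0 < ε := hi.1.trans hi.2
  by_contra hne
  rcases Nat.lt_or_gt_of_ne hne with h | h
  · have : (i : ℝ) + 1 ≤ j := by exact_mod_cast h
    nlinarith [hi.2, hj.1]
  · have : (j : ℝ) + 1 ≤ i := by exact_mod_cast h
    nlinarith [hj.2, hi.1]

namespace IsDoublingSpace

variable {X : Type*} [MetricSpace X] {C : ℕ}

theorem exists_finset_cover_pow (hC : IsDoublingSpace X C) (k : ℕ) (x : X) {R : ℝ} (hR : 0 < R) :
    ∃ F : Finset X, F.card ≤ C ^ k ∧ ball x R ⊆ ⋃ y ∈ F, ball y (R / 2 ^ k) := by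
  classical
  induction k with
  | zero => exact ⟨{x}, by simp, by simp⟩
  | succ k ih =>
    obtain ⟨F, hFcard, hFcov⟩ := ih
    choose G hGcard hGcov using fun y : X => hC y (R / 2 ^ k) (by positivity)
    refine ⟨F.biUnion G, ?_, fun z hz => ?_⟩
    · calc (F.biUnion G).card ≤ F.card * C :=
            Finset.card_biUnion_le_card_mul _ _ _ fun y _ => hGcard y
        _ ≤ C ^ k * C := Nat.mul_le_mul_right _ hFcard
    obtain ⟨y, hyF, hzy⟩ := mem_iUnion₂.1 (hFcov hz)
    obtain ⟨w, hwG, hzw⟩ := mem_iUnion₂.1 (hGcov y hzy)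
    rw [pow_succ, ← div_div]
    exact mem_iUnion₂.2 ⟨w, Finset.mem_biUnion.2 ⟨y, hyF, hwG⟩, hzw⟩

theorem encard_le_of_pairwise (hC : IsDoublingSpace X C) (k : ℕ) (x : X) {ε : ℝ} (hε : 0 < ε)
    {t : Set X} (ht : t ⊆ ball x (2 ^ k * ε)) (hsep : t.Pairwise fun p q => 2 * ε ≤ dist p q) :
    t.encard ≤ C ^ k := by
  obtain ⟨F, hFcard, hFcov⟩ := hC.exists_finset_cover_pow k x (by positivity : 0 < 2 ^ k * ε)
  rw [mul_div_cancel_left₀ _ (by positivity)] at hFcov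
  have hcenter : ∀ p ∈ t, ∃ y ∈ F, dist p y < ε := fun p hp => by
    simpa using hFcov (ht hp)
  choose! f hfF hfp using hcenter
  have hinj : InjOn f t := fun p hp q hq hpq => by
    by_contra hne
    have := dist_triangle_right p q (f p)
    linarith [hsep hp hq hne, hfp p hp, hpq ▸ hfp q hq]
  calc t.encard ≤ (F : Set X).encard := encard_le_encard_of_injOn (fun p hp => hfF p hp) hinj
    _ = F.card := encard_coe_eq_coe_finsetCard F
    _ ≤ C ^ k := by exact_mod_cast hFcard

theorem encard_inter_ball_le (hC : IsDoublingSpace X C) {r : ℝ} (hr : 0 < r) {s : Set X}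
    (hs : s.Pairwise fun p q => r ≤ dist p q) (x : X) : (s ∩ ball x (4 * r)).encard ≤ C ^ 3 :=
  hC.encard_le_of_pairwise 3 x (half_pos hr) (fun p hp => by convert hp.2 using 2; ring)
    ((hs.mono inter_subset_left).imp fun p q h => by linarith)

end IsDoublingSpace

section RadiusSelection

variable {X : Type*} [MetricSpace X] {s : Set X} {r ε : ℝ} {n : ℕ}

theorem exists_dist_lt_of_maximal_pairwise (hr : 0 < r)
    (hs : Maximal (fun t : Set X => t.Pairwise fun p q => r ≤ dist p q) s) (z : X) :
    ∃ x ∈ s, dist z x < r := by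
  by_contra! hfar
  have hins : (insert z s).Pairwise fun p q => r ≤ dist p q :=
    hs.prop.insert fun y hy _ => ⟨hfar y hy, dist_comm z y ▸ hfar y hy⟩
  have hz : z ∈ s := hs.eq_of_subset hins (subset_insert z s) ▸ mem_insert z s
  linarith [hfar z hz, dist_self z]

lemma add_natCast_mul_mem_Icc (hε : 0 ≤ ε) (hnε : (n + 1) * ε ≤ r) (j : Fin (n + 1)) :
    r + j * ε ∈ Icc r (2 * r) := by
  have hj : (j : ℝ) ≤ n := by exact_mod_cast Nat.lt_succ_iff.1 j.isLt
  constructor <;> nlinarith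

lemma exists_index_gap_not_mem_Ioo {x : X} (hN : (s ∩ ball x (4 * r)).encard ≤ n)
    (hnε : (n + 1) * ε ≤ r) (ρ : X → ℝ) (hρ : ∀ y, ρ y ≤ 2 * r) :
    ∃ j : Fin (n + 1), ∀ y ∈ s, dist x y - (r + j * ε) - ρ y ∉ Ioo 0 ε := by
  have hlt : (s ∩ ball x (4 * r)).encard < Fintype.card (Fin (n + 1)) := by
    rw [Fintype.card_fin]
    exact hN.trans_lt (by exact_mod_cast n.lt_succ_self)
  obtain ⟨j, hj⟩ := exists_forall_not_of_encard_lt hlt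
    (fun y (j : Fin (n + 1)) => dist x y - (r + j * ε) - ρ y ∈ Ioo 0 ε)
    fun y _ i j hi hj => Fin.ext <| eq_of_sub_natCast_mul_mem_Ioo (a := dist x y - r - ρ y)
      (by convert hi using 1; ring) (by convert hj using 1; ring)
  refine ⟨j, fun y hy hbad => hj y ⟨hy, ?_⟩ hbad⟩
  have hjn : (j : ℝ) ≤ n := by exact_mod_cast Nat.lt_succ_iff.1 j.isLt
  rw [mem_ball, dist_comm]
  nlinarith [hbad.1, hbad.2, hρ y]

theorem exists_radii_gap_not_mem_Ioo (hN : ∀ x, (s ∩ ball x (4 * r)).encard ≤ n) (hε : 0 ≤ ε)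
    (hnε : (n + 1) * ε ≤ r) :
    ∃ ρ : X → ℝ, (∀ x, ρ x ∈ Icc r (2 * r)) ∧
      ∀ x ∈ s, ∀ y ∈ s, dist x y - ρ x - ρ y ∉ Ioo 0 ε := by
  classical
  have hr : 0 ≤ r := le_trans (by positivity) hnε
  let rad (j : Fin (n + 1)) : ℝ := r + j * ε
  have hrad (j : Fin (n + 1)) : rad j ∈ Icc r (2 * r) := add_natCast_mul_mem_Icc hε hnε j
  obtain ⟨j, hj⟩ := (IsWellFounded.wf (r := @WellOrderingRel X)).exists_fix_of_forall_exists
    (fun x f b => ∀ y ∈ s, ∀ hyx : WellOrderingRel y x, dist x y - rad b - rad (f y hyx) ∉ Ioo 0 ε)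
    fun x f => by
      obtain ⟨b, hb⟩ := exists_index_gap_not_mem_Ioo (hN x) hnε
        (fun y => if hyx : WellOrderingRel y x then rad (f y hyx) else r)
        fun y => by split_ifs; exacts [(hrad _).2, by linarith]
      exact ⟨b, fun y hy hyx => by simpa only [dif_pos hyx] using hb y hy⟩
  refine ⟨fun x => rad (j x), fun x => hrad (j x), fun x hx y hy => ?_⟩
  rcases trichotomous_of (@WellOrderingRel X) x y with hxy | rfl | hyx
  · rw [dist_comm, sub_right_comm]
    exact hj y x hx hxy
  · rw [dist_self]
    exact fun h => by linarith [h.1, (hrad (j x)).1]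
  · exact hj x y hy hyx

end RadiusSelection

/-- **Lemma 2.1.** In a doubling metric space there is a constant `c > 0`, depending only on
the doubling constant, such that for every `r > 0` there are `r`-separated points `{xᵢ}` and
radii `rᵢ ∈ [r, 2r]` such that the balls `B(xᵢ, rᵢ)` cover `X` and for all `i, j` the quantity
`d(xᵢ, xⱼ) - rᵢ - rⱼ` does not lie in the open interval `(0, c * r)`. -/
theorem separated_ball_covering (C : ℕ) :
    ∃ c : ℝ, 0 < c ∧
      ∀ (X : Type) [MetricSpace X], IsDoublingSpace X C →
        ∀ r : ℝ, 0 < r → ∃ (s : Set X) (ρ : X → ℝ),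
          (∀ x ∈ s, ∀ y ∈ s, x ≠ y → r ≤ dist x y) ∧
          (∀ x ∈ s, ρ x ∈ Icc r (2 * r)) ∧
          (∀ z : X, ∃ x ∈ s, z ∈ ball x (ρ x)) ∧
          (∀ x ∈ s, ∀ y ∈ s, dist x y - ρ x - ρ y ∉ Ioo 0 (c * r)) := by
  refine ⟨1 / (C ^ 3 + 1), by positivity, fun X _ hC r hr => ?_⟩
  obtain ⟨s, hs⟩ := exists_maximal_pairwise fun x y : X => r ≤ dist x y
  obtain ⟨ρ, hρ, hgap⟩ := exists_radii_gap_not_mem_Ioo (ε := 1 / (C ^ 3 + 1) * r)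
    (hC.encard_inter_ball_le hr hs.prop) (by positivity) (le_of_eq (by push_cast; field_simp))
  refine ⟨s, ρ, hs.prop, fun x _ => hρ x, fun z => ?_, hgap⟩
  obtain ⟨x, hx, hzx⟩ := exists_dist_lt_of_maximal_pairwise hr hs z
  exact ⟨x, hx, hzx.trans_le (hρ x).1⟩
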